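/- Let A be an N×N complex matrix. Then there exists an N×N complex matrix B and a polynomial r ∈ ℂ[x] such that A = r(B) and B is nonderogatory (its characteristic polynomial equals its minimal polynomial). -/

import Mathlib

/-!
Decompose the `ℂ[X]`-module defined by `A` into cyclic blocks `ℂ[X] ⧸ ((X - lᵢ) ^ eᵢ)`
(Jordan form). Let `B` act on the `i`-th block as multiplication by `X + (μᵢ - lᵢ)` for pairwise
distinct `μᵢ`: this is a single Jordan block with eigenvalue `μᵢ`, so the minimal polynomial of `B`
is `∏ (X - μᵢ) ^ eᵢ`, of degree `N`. By the Chinese remainder theorem some `r` satisfies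
`r ≡ X - (μᵢ - lᵢ) mod (X - μᵢ) ^ eᵢ` for all `i`, and then `r(B)` acts as `X` on every block,
i.e. `r(B) = A`.
-/

open Polynomial Module

namespace Polynomial

theorem aeval_mk_X_add_C_eq_zero_iff {R : Type*} [CommRing R] (a b : R) (n : ℕ) (q : R[X]) :
    aeval (Ideal.Quotient.mk (Ideal.span {(X - C a) ^ n}) (X + C b)) q = 0 ↔
      (X - C (a + b)) ^ n ∣ q := by
  have htaylor : taylor b ((X - C (a + b)) ^ n) = (X - C a) ^ n := by
    simp [C_add]
  rw [← Ideal.Quotient.mkₐ_eq_mk R, aeval_algHom_apply, Ideal.Quotient.mkₐ_eq_mk,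
    Ideal.Quotient.eq_zero_iff_mem, Ideal.mem_span_singleton, ← comp_eq_aeval, ← taylor_apply,
    ← htaylor]
  exact map_dvd_iff (taylorEquiv b)

instance finite_quotient_span_X_sub_C_pow {K : Type*} [Field K] (a : K) (n : ℕ) :
    Module.Finite K (K[X] ⧸ Ideal.span {(X - C a) ^ n}) :=
  .of_basis (AdjoinRoot.powerBasis (pow_ne_zero n (X_sub_C_ne_zero a))).basis

theorem pairwise_isCoprime_X_sub_C_pow {K ι : Type*} [Field K] {μ : ι → K}
    (hμ : Function.Injective μ) (e : ι → ℕ) :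
    Pairwise (Function.onFun IsCoprime fun i => (X - C (μ i)) ^ e i) := fun _ _ hij =>
  (isCoprime_X_sub_C_of_isUnit_sub (sub_ne_zero.mpr (hμ.ne hij)).isUnit).pow

end Polynomial

theorem Matrix.charpoly_eq_minpoly_of_card_le_natDegree {n K : Type*} [Fintype n]
    [DecidableEq n] [Field K] (B : Matrix n n K) (h : Fintype.card n ≤ (minpoly K B).natDegree) :
    B.charpoly = minpoly K B :=
  eq_of_monic_of_dvd_of_natDegree_le (minpoly.monic (Matrix.isIntegral B)) B.charpoly_monic
    B.minpoly_dvd_charpoly (by rwa [B.charpoly_natDegree_eq_dim])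

section ShiftedX

variable {K : Type*} [Field K] {ι : Type*} (l μ : ι → K) (e : ι → ℕ)

noncomputable def shiftedX : Π i, K[X] ⧸ Ideal.span {(X - C (l i)) ^ e i} :=
  fun i => Ideal.Quotient.mk _ (X + C (μ i - l i))

theorem aeval_shiftedX_eq_zero_iff (q : K[X]) :
    aeval (shiftedX l μ e) q = 0 ↔ ∀ i, (X - C (μ i)) ^ e i ∣ q := by
  simp only [aeval_pi_apply, funext_iff, Pi.zero_apply, shiftedX,
    aeval_mk_X_add_C_eq_zero_iff, add_sub_cancel]

variable [Fintype ι] {μ}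

theorem minpoly_shiftedX (hμ : Function.Injective μ) :
    minpoly K (shiftedX l μ e) = ∏ i, (X - C (μ i)) ^ e i := by
  have hdvd (q : K[X]) : aeval (shiftedX l μ e) q = 0 ↔ ∏ i, (X - C (μ i)) ^ e i ∣ q := by
    rw [aeval_shiftedX_eq_zero_iff]
    exact ⟨Fintype.prod_dvd_of_coprime (pairwise_isCoprime_X_sub_C_pow hμ e),
      fun h i => (Finset.dvd_prod_of_mem (fun i => (X - C (μ i)) ^ e i)
        (Finset.mem_univ i)).trans h⟩
  have hmonic : (∏ i, (X - C (μ i)) ^ e i).Monic :=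
    monic_prod_of_monic _ _ fun i _ => (monic_X_sub_C _).pow _
  refine (minpoly.unique K (shiftedX l μ e) hmonic ((hdvd _).mpr dvd_rfl) ?_).symm
  intro q hq hq0
  exact degree_le_of_dvd ((hdvd q).mp hq0) hq.ne_zero

theorem exists_aeval_shiftedX_eq_algebraMap_X (hμ : Function.Injective μ) :
    ∃ r : K[X], aeval (shiftedX l μ e) r = algebraMap K[X] _ X := by
  obtain ⟨r, hr⟩ := Ideal.exists_forall_sub_mem_ideal
    (I := fun i => Ideal.span {(X - C (μ i)) ^ e i})
    (fun i j hij => (Ideal.isCoprime_span_singleton_iff _ _).mpr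
      (pairwise_isCoprime_X_sub_C_pow hμ e hij)) (fun i => X - C (μ i - l i))
  refine ⟨r, funext fun i => ?_⟩
  have hri := (aeval_mk_X_add_C_eq_zero_iff (l i) (μ i - l i) (e i) _).mpr
    (Ideal.mem_span_singleton.mp (by rw [add_sub_cancel]; exact hr i))
  rw [map_sub, sub_eq_zero] at hri
  rw [aeval_pi_apply₂, shiftedX, hri, ← Ideal.Quotient.mkₐ_eq_mk K, aeval_algHom_apply]
  simp

end ShiftedX

namespace Module.End

universe u

variable {K : Type u} [Field K] [IsAlgClosed K] {V : Type*} [AddCommGroup V] [Module K V]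
  [FiniteDimensional K V]

theorem exists_linearEquiv_pi_quotient_span_X_sub_C_pow (f : End K V) :
    ∃ (ι : Type u) (_ : Fintype ι) (l : ι → K) (e : ι → ℕ),
      Nonempty (AEval' f ≃ₗ[K[X]] Π i, K[X] ⧸ Ideal.span {(X - C (l i)) ^ e i}) := by
  obtain ⟨ι, _, p, hp, e, ⟨E⟩⟩ :=
    Module.equiv_directSum_of_isTorsion (Module.AEval.isTorsion_of_finiteDimensional K V f)
  have hlinear (i : ι) : ∃ l, Associated (X - C l) (p i) := by
    obtain ⟨l, hl⟩ := IsAlgClosed.exists_root (p i) (degree_pos_of_irreducible (hp i)).ne'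
    exact ⟨l, (irreducible_X_sub_C l).associated_of_dvd (hp i) (dvd_iff_isRoot.mpr hl)⟩
  choose l hl using hlinear
  exact ⟨ι, inferInstance, l, e, ⟨E.trans <| (DirectSum.linearEquivFunOnFintype _ _ _).trans <|
    LinearEquiv.piCongrRight fun i => Submodule.quotEquivOfEq _ _ <|
      Ideal.span_singleton_eq_span_singleton.mpr ((hl i).pow_pow).symm⟩⟩

theorem exists_aeval_eq_and_natDegree_minpoly_eq_finrank (f : End K V) :
    ∃ (g : End K V) (r : K[X]), aeval g r = f ∧ (minpoly K g).natDegree = finrank K V := by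
  obtain ⟨ι, _, l, e, ⟨E⟩⟩ := f.exists_linearEquiv_pi_quotient_span_X_sub_C_pow
  let W := Π i, K[X] ⧸ Ideal.span {(X - C (l i)) ^ e i}
  let μ (i : ι) : K := Infinite.natEmbedding K (Fintype.equivFin ι i)
  have hμ : Function.Injective μ :=
    (Infinite.natEmbedding K).injective.comp
      (Fin.val_injective.comp (Fintype.equivFin ι).injective)
  obtain ⟨r, hr⟩ := exists_aeval_shiftedX_eq_algebraMap_X l e hμ
  let φ : V ≃ₗ[K] W := (AEval'.of f).trans (E.restrictScalars K)
  have hφ (v : V) : φ (f v) = algebraMap K[X] W X * φ v := by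
    rw [← Algebra.smul_def (R := K[X]) (A := W)]
    simp [φ, ← AEval'.X_smul_of]
  refine ⟨φ.symm.conjAlgEquiv K (Algebra.lmul K W (shiftedX l μ e)), r, ?_, ?_⟩
  · rw [← AlgEquiv.coe_toAlgHom, aeval_algHom_apply, aeval_algHom_apply, hr]
    ext v
    exact φ.symm_apply_eq.mpr (hφ v).symm
  · rw [minpoly.algEquiv_eq (A := K) (B := End K W) (B' := End K V),
      minpoly.algHom_eq _ Algebra.lmul_injective, minpoly_shiftedX l e hμ,
      natDegree_prod_of_monic _ _ fun i _ => (monic_X_sub_C _).pow _, φ.finrank_eq,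
      finrank_pi_fintype]
    simp [finrank_quotient_span_eq_natDegree]

end Module.End

theorem stmt_8 {N : ℕ} (A : Matrix (Fin N) (Fin N) ℂ) :
    ∃ (B : Matrix (Fin N) (Fin N) ℂ) (r : Polynomial ℂ),
      A = Polynomial.aeval B r ∧ B.charpoly = minpoly ℂ B := by
  obtain ⟨g, r, hgr, hdeg⟩ :=
    Module.End.exists_aeval_eq_and_natDegree_minpoly_eq_finrank (Matrix.toLin' A)
  refine ⟨LinearMap.toMatrixAlgEquiv' g, r, ?_,
    Matrix.charpoly_eq_minpoly_of_card_le_natDegree _ ?_⟩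
  · rw [← AlgEquiv.coe_toAlgHom, aeval_algHom_apply, hgr]
    exact (LinearMap.toMatrixAlgEquiv'_toLinAlgEquiv' A).symm
  · simp [minpoly.algEquiv_eq, hdeg]
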